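/- For the regular polygon with n ≥ 3 unit sides and constant weight a ≡ 1, the vectors A = ∑_{j=0}^{n-1} Re(ξ^j(ξ-1))·ξ^j(ξ-1)/|1-ξ| and B = ∑_{j=0}^{n-1} Im(ξ^j(ξ-1))·ξ^j(ξ-1)/|1-ξ| (with ξ = e^{2πi/n}) are ℝ-linearly independent; hence the regular polygon with constant weights is a flexible unbalanced network. -/

import Mathlib

/-!
The edges `d j = ξ ^ j * (ξ - 1) / ‖1 - ξ‖` are unit vectors with `∑ j, d j ^ 2 = 0`, because
`∑ j < n, ξ ^ (2 * j) = 0` once `ξ ^ 2 ≠ 1`, i.e. `n ≥ 3`. For unit vectors with vanishing sum of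
squares the `ℝ`-linear map `c ↦ ∑ j, Re (conj (d j) * c) • d j` is `(n / 2) • id`, and `A`, `B` are
(up to the factor `‖1 - ξ‖`) its values at `1` and `I`, hence independent.

The same map kills the infinitesimal motions. Once the edge increments `P j = Ψ (j + 1) - Ψ j`
satisfy `Re (conj (d j) * P j) = 0`, the force balance at vertex `j + 1` says that
`adot j * d j + P j` does not depend on `j`; call it `c`. Then `adot j = Re (conj (d j) * c)`, and
summing over the cycle, where the `P j` telescope to `0`, gives `n • c = (n / 2) • c`. So `c = 0`,
hence `adot = 0` and `P = 0`.
-/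

open Complex ComplexConjugate Finset

open Complex in
/-- Differential of the force contribution of a single unit edge. -/
noncomputable def dForce (w wdot : ℝ) (d dPhi : ℂ) : ℂ :=
  (wdot : ℂ) * d +
    (w : ℂ) * (dPhi - d * ((((starRingEnd ℂ d) * dPhi).re : ℝ) : ℂ))

theorem ZMod.sum_val_eq_sum_range {M : Type*} [AddCommMonoid M] (n : ℕ) [NeZero n]
    (f : ℕ → M) : ∑ j : ZMod n, f j.val = ∑ k ∈ range n, f k :=
  sum_nbij' (fun j => j.val) (fun k => (k : ZMod n))
    (fun a _ => mem_range.2 (ZMod.val_lt a)) (fun _ _ => mem_univ _)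
    (fun a _ => ZMod.natCast_zmod_val a) (fun _ hk => ZMod.val_cast_of_lt (mem_range.1 hk))
    (fun _ _ => rfl)

theorem ZMod.apply_eq_apply_zero_of_apply_add_one {n : ℕ} {α : Type*} {g : ZMod n → α}
    (h : ∀ j, g (j + 1) = g j) (j : ZMod n) : g j = g 0 := by
  obtain ⟨k, rfl⟩ := ZMod.intCast_surjective j
  induction k using Int.induction_on with
  | zero => simp
  | succ k ih => rw [Int.cast_add, Int.cast_one, h, ih]
  | pred _ ih => rw [← ih, ← h, Int.cast_sub, Int.cast_one, sub_add_cancel]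

theorem sum_range_pow_pow_eq_zero {K : Type*} [DivisionRing K] {ξ : K} {n k : ℕ}
    (hn : ξ ^ n = 1) (hk : ξ ^ k ≠ 1) : ∑ j ∈ range n, (ξ ^ j) ^ k = 0 := by
  simp_rw [← pow_mul, mul_comm _ k, pow_mul]
  rw [geom_sum_eq hk, ← pow_mul, mul_comm, pow_mul, hn, one_pow, sub_self, zero_div]

theorem sum_re_conj_mul_mul_eq {ι : Type*} {s : Finset ι} {d : ι → ℂ} {r : ℝ}
    (hd : ∀ j ∈ s, ‖d j‖ = r) (hsq : ∑ j ∈ s, d j ^ 2 = 0) (c : ℂ) :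
    ∑ j ∈ s, ((conj (d j) * c).re : ℂ) * d j = #s * r ^ 2 * c / 2 := by
  have key : ∀ j ∈ s,
      ((conj (d j) * c).re : ℂ) * d j = (r ^ 2 * c + conj c * d j ^ 2) / 2 := by
    intro j hj
    rw [re_eq_add_conj, ← hd j hj, ← mul_conj', map_mul, conj_conj]
    ring
  rw [sum_congr rfl key, ← sum_div, sum_add_distrib, ← mul_sum, ← mul_sum, hsq, sum_const,
    nsmul_eq_mul]
  ring

theorem sum_re_mul_self_eq {ι : Type*} {s : Finset ι} {w : ι → ℂ} {r : ℝ}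
    (hw : ∀ j ∈ s, ‖w j‖ = r) (hsq : ∑ j ∈ s, w j ^ 2 = 0) :
    ∑ j ∈ s, ((w j).re : ℂ) * w j = #s * r ^ 2 / 2 := by
  simpa using sum_re_conj_mul_mul_eq hw hsq 1

theorem sum_im_mul_self_eq {ι : Type*} {s : Finset ι} {w : ι → ℂ} {r : ℝ}
    (hw : ∀ j ∈ s, ‖w j‖ = r) (hsq : ∑ j ∈ s, w j ^ 2 = 0) :
    ∑ j ∈ s, ((w j).im : ℂ) * w j = #s * r ^ 2 / 2 * I := by
  simpa [mul_div_right_comm] using sum_re_conj_mul_mul_eq hw hsq I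

theorem linearIndependent_pair_self_mul_I {x : ℂ} (hx : x ≠ 0) :
    LinearIndependent ℝ ![x, x * I] := by
  rw [LinearIndependent.pair_iff]
  intro s t hst
  have h : x * (s + t * I) = 0 := by rw [← hst, real_smul, real_smul]; ring
  have h' := (mul_eq_zero.1 h).resolve_left hx
  exact ⟨by simpa using congrArg re h', by simpa using congrArg im h'⟩

theorem dForce_neg (w a : ℝ) (d P : ℂ) : dForce w a (-d) (-P) = -dForce w a d P := by
  simp only [dForce, map_neg, neg_mul_neg]
  ring

theorem dForce_one_of_re_eq_zero {a : ℝ} {d P : ℂ} (h : (conj d * P).re = 0) :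
    dForce 1 a d P = a * d + P := by
  simp [dForce, h]

theorem re_conj_mul_eq_of_mul_add_eq {a : ℝ} {d P c : ℂ} (hd : ‖d‖ = 1)
    (hL : (conj d * P).re = 0) (hc : a * d + P = c) : a = (conj d * c).re := by
  have h : conj d * c = a * ‖d‖ ^ 2 + conj d * P := by
    rw [← hc, ← mul_conj']; ring
  simpa [hL, hd] using (congrArg re h).symm

theorem eq_zero_of_forall_mul_add_eq_of_sum_sq_eq_zero {ι : Type*} [Fintype ι] [Nonempty ι]
    {d P : ι → ℂ} {a : ι → ℝ} {c : ℂ} (hd : ∀ j, ‖d j‖ = 1) (hsq : ∑ j, d j ^ 2 = 0)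
    (hP : ∑ j, P j = 0) (hL : ∀ j, (conj (d j) * P j).re = 0)
    (hc : ∀ j, a j * d j + P j = c) : c = 0 := by
  have h : (Fintype.card ι : ℂ) * c = Fintype.card ι * c / 2 := calc
    (Fintype.card ι : ℂ) * c = ∑ j, (a j * d j + P j) := by simp [hc]
    _ = ∑ j, ((conj (d j) * c).re : ℂ) * d j := by
      simp only [sum_add_distrib, hP, add_zero, re_conj_mul_eq_of_mul_add_eq (hd _) (hL _) (hc _)]
    _ = Fintype.card ι * c / 2 := by
      simpa using sum_re_conj_mul_mul_eq (fun j _ => hd j) hsq c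
  have hcard : (Fintype.card ι : ℂ) ≠ 0 := Nat.cast_ne_zero.2 Fintype.card_ne_zero
  have h0 : (Fintype.card ι : ℂ) * c = 0 := by linear_combination 2 * h
  exact (mul_eq_zero.1 h0).resolve_left hcard

theorem cycle_force_balance_shift {n : ℕ} {z Ψ : ZMod n → ℂ} {adot : ZMod n → ℝ}
    (hF : ∀ j : ZMod n,
      dForce 1 (adot j) (z (j + 1) - z j) (Ψ (j + 1) - Ψ j)
        + dForce 1 (adot (j - 1)) (z (j - 1) - z j) (Ψ (j - 1) - Ψ j) = 0)
    (hL : ∀ j : ZMod n, (conj (z (j + 1) - z j) * (Ψ (j + 1) - Ψ j)).re = 0) (j : ZMod n) :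
    adot (j + 1) * (z (j + 1 + 1) - z (j + 1)) + (Ψ (j + 1 + 1) - Ψ (j + 1))
      = adot j * (z (j + 1) - z j) + (Ψ (j + 1) - Ψ j) := by
  have h := hF (j + 1)
  rw [add_sub_cancel_right, ← neg_sub (z (j + 1)) (z j), ← neg_sub (Ψ (j + 1)) (Ψ j),
    dForce_neg, dForce_one_of_re_eq_zero (hL _), dForce_one_of_re_eq_zero (hL _)] at h
  linear_combination h

theorem cycle_infinitesimal_motion_trivial {n : ℕ} [NeZero n] {z : ZMod n → ℂ}
    (hunit : ∀ j, ‖z (j + 1) - z j‖ = 1) (hsq : ∑ j, (z (j + 1) - z j) ^ 2 = 0)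
    (Ψ : ZMod n → ℂ) (adot : ZMod n → ℝ)
    (hF : ∀ j : ZMod n,
      dForce 1 (adot j) (z (j + 1) - z j) (Ψ (j + 1) - Ψ j)
        + dForce 1 (adot (j - 1)) (z (j - 1) - z j) (Ψ (j - 1) - Ψ j) = 0)
    (hL : ∀ j : ZMod n, (conj (z j - z (j + 1)) * (Ψ j - Ψ (j + 1))).re = 0) :
    (∃ e : ℂ, ∀ j, Ψ j = e) ∧ ∀ j, adot j = 0 := by
  have hL' : ∀ j, (conj (z (j + 1) - z j) * (Ψ (j + 1) - Ψ j)).re = 0 := fun j => by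
    simpa only [← neg_sub (z (j + 1)), ← neg_sub (Ψ (j + 1)), map_neg, neg_mul_neg] using hL j
  have hc := ZMod.apply_eq_apply_zero_of_apply_add_one
    (g := fun j => (adot j : ℂ) * (z (j + 1) - z j) + (Ψ (j + 1) - Ψ j))
    (cycle_force_balance_shift hF hL')
  have hP : ∑ j, (Ψ (j + 1) - Ψ j) = 0 := by
    rw [sum_sub_distrib, ← Equiv.sum_comp (Equiv.addRight 1) Ψ, sub_eq_zero]
    rfl
  have hc0 := eq_zero_of_forall_mul_add_eq_of_sum_sq_eq_zero hunit hsq hP hL' hc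
  have hadot : ∀ j, adot j = 0 := fun j => by
    simpa [hc0] using re_conj_mul_eq_of_mul_add_eq (hunit j) (hL' j) ((hc j).trans hc0)
  have hΨ : ∀ j, Ψ (j + 1) = Ψ j := fun j => by
    simpa [hadot, sub_eq_zero] using (hc j).trans hc0
  exact ⟨⟨Ψ 0, ZMod.apply_eq_apply_zero_of_apply_add_one hΨ⟩, hadot⟩

theorem pow_val_add_one {M : Type*} [Monoid M] {ξ : M} {n : ℕ} [Fact (1 < n)] (hξ : ξ ^ n = 1)
    (j : ZMod n) : ξ ^ (j + 1).val = ξ ^ j.val * ξ := by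
  rw [ZMod.val_add, ZMod.val_one, ← pow_eq_pow_mod _ hξ, pow_succ]

theorem regular_polygon_flexible_general
    (n : ℕ) (hn : 3 ≤ n)
    (ξ : ℂ) (hξ : ξ = Complex.exp (2 * Real.pi * Complex.I / n))
    (z : ZMod n → ℂ)
    (hz : ∀ j : ZMod n, z j = ξ ^ (j.val) / ((‖1 - ξ‖ : ℝ) : ℂ)) :
    LinearIndependent ℝ
      ![∑ j ∈ Finset.range n,
          ((((ξ ^ j * (ξ - 1)).re : ℝ)) : ℂ) * (ξ ^ j * (ξ - 1)) /
            ((‖1 - ξ‖ : ℝ) : ℂ),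
        ∑ j ∈ Finset.range n,
          ((((ξ ^ j * (ξ - 1)).im : ℝ)) : ℂ) * (ξ ^ j * (ξ - 1)) /
            ((‖1 - ξ‖ : ℝ) : ℂ)]
    ∧
    (∀ (Ψ : ZMod n → ℂ) (adot : ZMod n → ℝ),
      (∀ j : ZMod n,
        dForce 1 (adot j) (z (j + 1) - z j) (Ψ (j + 1) - Ψ j)
          + dForce 1 (adot (j - 1)) (z (j - 1) - z j) (Ψ (j - 1) - Ψ j) = 0) →
      (∀ j : ZMod n,
        ((starRingEnd ℂ (z j - z (j + 1))) * (Ψ j - Ψ (j + 1))).re = 0) →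
      ((∃ e : ℂ, ∀ j, Ψ j = e) ∧ ∀ j, adot j = 0)) := by
  have : Fact (1 < n) := ⟨by omega⟩
  have hprim : IsPrimitiveRoot ξ n := hξ ▸ isPrimitiveRoot_exp n (NeZero.ne n)
  set κ := ‖1 - ξ‖
  have hκ : κ ≠ 0 := norm_ne_zero_iff.2 (sub_ne_zero.2 (hprim.ne_one (by omega)).symm)
  have hw : ∀ j, ‖ξ ^ j * (ξ - 1)‖ = κ := fun j => by
    rw [norm_mul, norm_pow, hprim.norm'_eq_one (NeZero.ne n), one_pow, one_mul, norm_sub_rev]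
  have hsq : ∑ j ∈ range n, (ξ ^ j * (ξ - 1)) ^ 2 = 0 := by
    simp_rw [mul_pow]
    rw [← sum_mul, sum_range_pow_pow_eq_zero hprim.pow_eq_one
      (hprim.pow_ne_one_of_pos_of_lt two_ne_zero (by omega)), zero_mul]
  have hedge : ∀ j : ZMod n, z (j + 1) - z j = ξ ^ j.val * (ξ - 1) / κ := fun j => by
    rw [hz, hz, pow_val_add_one hprim.pow_eq_one]; ring
  refine ⟨?_, cycle_infinitesimal_motion_trivial ?_ ?_⟩
  · rw [← sum_div, ← sum_div, sum_re_mul_self_eq (fun j _ => hw j) hsq,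
      sum_im_mul_self_eq (fun j _ => hw j) hsq, ← div_mul_eq_mul_div _ _ I]
    exact linearIndependent_pair_self_mul_I (by simp [hκ, NeZero.ne n])
  · intro j
    rw [hedge, norm_div, hw, norm_real, Real.norm_of_nonneg (norm_nonneg _), div_self hκ]
  · simp_rw [hedge, div_pow, ← sum_div]
    rw [ZMod.sum_val_eq_sum_range n (fun k => (ξ ^ k * (ξ - 1)) ^ 2), hsq, zero_div]

/-- For the regular polygon with `n ≥ 3` unit sides (vertices
`z j = ξ^j/|1-ξ|`, `ξ = e^{2πi/n}`) and constant weight `a ≡ 1`, the vectors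
`A = ∑_j Re(ξ^j(ξ-1))·ξ^j(ξ-1)/|1-ξ|` and `B = ∑_j Im(ξ^j(ξ-1))·ξ^j(ξ-1)/|1-ξ|`
are `ℝ`-linearly independent; hence the regular polygon with constant weights
is a flexible unbalanced network (the kernel of `Λ = (D F, D L)` is reduced to
translations). -/
theorem regular_polygon_flexible
    (n : ℕ) (hn : 3 ≤ n) [NeZero n]
    (ξ : ℂ) (hξ : ξ = Complex.exp (2 * Real.pi * Complex.I / n))
    (z : ZMod n → ℂ)
    (hz : ∀ j : ZMod n, z j = ξ ^ (j.val) / ((‖1 - ξ‖ : ℝ) : ℂ)) :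
    LinearIndependent ℝ
      ![∑ j ∈ Finset.range n,
          ((((ξ ^ j * (ξ - 1)).re : ℝ)) : ℂ) * (ξ ^ j * (ξ - 1)) /
            ((‖1 - ξ‖ : ℝ) : ℂ),
        ∑ j ∈ Finset.range n,
          ((((ξ ^ j * (ξ - 1)).im : ℝ)) : ℂ) * (ξ ^ j * (ξ - 1)) /
            ((‖1 - ξ‖ : ℝ) : ℂ)]
    ∧
    (∀ (Ψ : ZMod n → ℂ) (adot : ZMod n → ℝ),
      (∀ j : ZMod n,
        dForce 1 (adot j) (z (j + 1) - z j) (Ψ (j + 1) - Ψ j)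
          + dForce 1 (adot (j - 1)) (z (j - 1) - z j) (Ψ (j - 1) - Ψ j) = 0) →
      (∀ j : ZMod n,
        ((starRingEnd ℂ (z j - z (j + 1))) * (Ψ j - Ψ (j + 1))).re = 0) →
      ((∃ e : ℂ, ∀ j, Ψ j = e) ∧ ∀ j, adot j = 0)) :=
  regular_polygon_flexible_general n hn ξ hξ z hz
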